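/- Let β > 0 with β ≠ 1, and let (a_k)_{k≥1} be a sequence of nonnegative real numbers with a_1 ≤ 1 and a_k ≤ 1 − a_1² for all k ≥ 2. Then for every r ∈ (0,1) satisfying 3(1−(1−r)^{1−β})/(1−β) ≥ 2((1−r)^{−β} − 1)/β, one has Σ_{k=0}^∞ r^{k+1} · (1/(k+1)) · Σ_{n=0}^k (Γ(k−n+β)/(Γ(k−n+1)Γ(β))) · a_{n+1} ≤ (1−(1−r)^{1−β})/(1−β). -/

import Mathlib

/-!
The Cesàro coefficients are `c_β(j) = Ring.multichoose β j`, the Taylor coefficients of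
`(1 - x) ^ (-β)`. Since `(k + 1) c_{β-1}(k + 1) = (β - 1) c_β(k)`, the binomial series for
`(1 - r) ^ (1 - β)` gives `∑ c_β(k) r^(k+1)/(k+1) = A := (1 - (1 - r)^(1-β))/(1 - β)`, and since
`∑_{j<k} c_β(j) = c_{β+1}(k) - c_β(k)` also `∑ (∑_{j<k} c_β(j)) r^(k+1)/(k+1) = B`, where
`B := ((1 - r)^(-β) - 1)/β - A`. Splitting off `a₁`, each Cesàro term is at most
`(a₁ c_β(k) + (1 - a₁²) ∑_{j<k} c_β(j)) r^(k+1)/(k+1)`, so the series is at most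
`a₁ A + (1 - a₁²) B`. The condition on `r` is `2B ≤ A`, and
`A - a₁ A - (1 - a₁²) B = (1 - a₁)(A - 2B) + (1 - a₁)² B ≥ 0`.
-/

open Real Finset

namespace Ring

section Field

variable {K : Type*} [Field K] [CharZero K]

lemma multichoose_eq_eval_div (r : K) (k : ℕ) :
    multichoose r k = (ascPochhammer K k).eval r / k.factorial := by
  rw [eq_div_iff (by exact_mod_cast k.factorial_ne_zero), mul_comm, ← nsmul_eq_mul,
    factorial_nsmul_multichoose_eq_ascPochhammer, Polynomial.ascPochhammer_smeval_eq_eval]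

lemma multichoose_succ_mul (r : K) (k : ℕ) :
    multichoose r (k + 1) * (k + 1) = r * multichoose (r + 1) k := by
  have hk : (k.factorial : K) ≠ 0 := by exact_mod_cast k.factorial_ne_zero
  rw [multichoose_eq_eval_div, multichoose_eq_eval_div, ascPochhammer_succ_left]
  simp only [Polynomial.eval_mul, Polynomial.eval_X, Polynomial.eval_comp, Polynomial.eval_add,
    Polynomial.eval_one, Nat.factorial_succ]
  field_simp
  push_cast
  ring

end Field

lemma multichoose_pos {K : Type*} [Field K] [LinearOrder K] [IsStrictOrderedRing K] {r : K}
    (hr : 0 < r) (k : ℕ) : 0 < multichoose r k := by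
  rw [multichoose_eq_eval_div]
  exact div_pos (ascPochhammer_pos k r hr) (by exact_mod_cast k.factorial_pos)

lemma sum_range_multichoose {R : Type*} [Ring R] [BinomialRing R] (r : R) (k : ℕ) :
    ∑ j ∈ range k, multichoose r j = multichoose (r + 1) k - multichoose r k := by
  induction k with
  | zero => simp
  | succ k ih => rw [sum_range_succ, ih, multichoose_succ_succ]; abel

end Ring

lemma Real.Gamma_nat_add_eq_Gamma_mul_ascPochhammer {s : ℝ} (hs : ∀ m : ℕ, s ≠ -m) (k : ℕ) :
    Gamma (k + s) = Gamma s * (ascPochhammer ℝ k).eval s := by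
  induction k with
  | zero => simp
  | succ k ih =>
    have hks : (k : ℝ) + s ≠ 0 := fun h => hs k (by linarith)
    rw [ascPochhammer_succ_eval, Nat.cast_succ, add_right_comm, Gamma_add_one hks, ih]
    ring

lemma Real.Gamma_nat_add_div_eq_multichoose {s : ℝ} (hs : ∀ m : ℕ, s ≠ -m) (k : ℕ) :
    Gamma (k + s) / (Gamma (k + 1) * Gamma s) = Ring.multichoose s k := by
  have := Gamma_ne_zero hs
  rw [Gamma_nat_add_eq_Gamma_mul_ascPochhammer hs, Gamma_nat_eq_factorial,
    Ring.multichoose_eq_eval_div]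
  field_simp

lemma hasSum_multichoose_mul_pow {a x : ℝ} (hx : |x| < 1) :
    HasSum (fun k => Ring.multichoose a k * x ^ k) ((1 - x) ^ (-a)) := by
  have h := (one_div_one_sub_rpow_hasFPowerSeriesOnBall_zero a).hasSum
    (y := x) (by simpa [enorm_eq_nnnorm, ← NNReal.coe_lt_coe] using hx)
  simp only [FormalMultilinearSeries.ofScalars_apply_eq, smul_eq_mul, zero_add] at h
  rw [rpow_neg (by linarith [abs_lt.1 hx]), ← one_div]
  simpa only [Ring.multichoose_eq] using h

lemma hasSum_multichoose_mul_pow_succ_div {γ x : ℝ} (hγ : γ ≠ 1) (hx : |x| < 1) :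
    HasSum (fun k : ℕ => Ring.multichoose γ k * (x ^ (k + 1) / (k + 1)))
      ((1 - (1 - x) ^ (1 - γ)) / (1 - γ)) := by
  have hγ' : γ - 1 ≠ 0 := sub_ne_zero.2 hγ
  have hterm (k : ℕ) : Ring.multichoose (γ - 1) (k + 1) * x ^ (k + 1)
      = (γ - 1) * (Ring.multichoose γ k * (x ^ (k + 1) / (k + 1))) := by
    have h := Ring.multichoose_succ_mul (γ - 1) k
    rw [sub_add_cancel] at h
    field_simp
    linear_combination x ^ (k + 1) * h
  have h := (hasSum_nat_add_iff' 1).2 (hasSum_multichoose_mul_pow (a := γ - 1) hx)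
  simp only [hterm, sum_range_one, Ring.multichoose_zero_right, pow_zero, mul_one,
    neg_sub] at h
  have h' := h.div_const (γ - 1)
  simp only [mul_div_cancel_left₀ _ hγ'] at h'
  rwa [← neg_div_neg_eq, neg_sub, neg_sub] at h'

lemma hasSum_sum_range_multichoose_mul_pow_succ_div {γ x : ℝ} (hγ0 : γ ≠ 0) (hγ1 : γ ≠ 1)
    (hx : |x| < 1) :
    HasSum (fun k : ℕ => (∑ j ∈ range k, Ring.multichoose γ j) * (x ^ (k + 1) / (k + 1)))
      (((1 - x) ^ (-γ) - 1) / γ - (1 - (1 - x) ^ (1 - γ)) / (1 - γ)) := by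
  have h := (hasSum_multichoose_mul_pow_succ_div (γ := γ + 1) (by simpa using hγ0) hx).sub
    (hasSum_multichoose_mul_pow_succ_div hγ1 hx)
  simp only [← sub_mul, ← Ring.sum_range_multichoose] at h
  rwa [show (1 : ℝ) - (γ + 1) = -γ by ring, div_neg, ← neg_div, neg_sub] at h

lemma sum_range_sub_mul_succ_le {c a : ℕ → ℝ} {M : ℝ} (hc : ∀ j, 0 ≤ c j)
    (ha : ∀ n, 2 ≤ n → a n ≤ M) (k : ℕ) :
    ∑ n ∈ range (k + 1), c (k - n) * a (n + 1) ≤ c k * a 1 + M * ∑ j ∈ range k, c j := by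
  rw [sum_range_succ', Nat.sub_zero, add_comm, ← sum_range_reflect, mul_sum]
  refine add_le_add le_rfl (sum_le_sum fun i hi => ?_)
  have : k - (k - 1 - i + 1) = i := by have := mem_range.1 hi; omega
  rw [this, mul_comm M]
  exact mul_le_mul_of_nonneg_left (ha _ (by omega)) (hc i)

lemma tsum_mul_sum_range_sub_mul_succ_le {c a w : ℕ → ℝ} {M A B : ℝ} (hc : ∀ j, 0 ≤ c j)
    (ha : ∀ n, 0 ≤ a n) (haM : ∀ n, 2 ≤ n → a n ≤ M) (hw : ∀ k, 0 ≤ w k)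
    (hA : HasSum (fun k => c k * w k) A) (hB : HasSum (fun k => (∑ j ∈ range k, c j) * w k) B) :
    ∑' k, w k * ∑ n ∈ range (k + 1), c (k - n) * a (n + 1) ≤ a 1 * A + M * B := by
  have hle (k : ℕ) : w k * ∑ n ∈ range (k + 1), c (k - n) * a (n + 1)
      ≤ a 1 * (c k * w k) + M * ((∑ j ∈ range k, c j) * w k) :=
    (mul_le_mul_of_nonneg_left (sum_range_sub_mul_succ_le hc haM k) (hw k)).trans_eq (by ring)
  have hnonneg (k : ℕ) : 0 ≤ w k * ∑ n ∈ range (k + 1), c (k - n) * a (n + 1) :=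
    mul_nonneg (hw k) (sum_nonneg fun n _ => mul_nonneg (hc (k - n)) (ha (n + 1)))
  have hU := (hA.mul_left (a 1)).add (hB.mul_left M)
  exact ((hU.summable.of_nonneg_of_le hnonneg hle).tsum_le_tsum hle hU.summable).trans_eq
    hU.tsum_eq

lemma mul_add_one_sub_sq_mul_le {t A B : ℝ} (ht : t ≤ 1) (hB : 0 ≤ B) (h : 2 * B ≤ A) :
    t * A + (1 - t ^ 2) * B ≤ A := by
  nlinarith [mul_nonneg (sub_nonneg.2 ht) (sub_nonneg.2 h), mul_nonneg (sq_nonneg (1 - t)) hB]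

/-- Bohr-type inequality for the β-Cesàro operator applied to functions
vanishing at the origin (remark following Theorem 2.1, real coefficient form). -/
theorem cesaro_bohr_beta_normalized (β : ℝ) (hβ : 0 < β) (hβ1 : β ≠ 1)
    (a : ℕ → ℝ) (ha : ∀ k, 0 ≤ a k) (ha1 : a 1 ≤ 1)
    (hak : ∀ k, 2 ≤ k → a k ≤ 1 - (a 1) ^ 2)
    (r : ℝ) (hr : r ∈ Set.Ioo (0 : ℝ) 1)
    (hR : 2 * ((1 - r) ^ (-β) - 1) / β ≤ 3 * (1 - (1 - r) ^ (1 - β)) / (1 - β)) :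
    ∑' k : ℕ, r ^ (k + 1) * ((1 / (k + 1 : ℝ)) *
        ∑ n ∈ Finset.range (k + 1),
          Real.Gamma (((k - n : ℕ) : ℝ) + β) /
            (Real.Gamma (((k - n : ℕ) : ℝ) + 1) * Real.Gamma β) * a (n + 1))
      ≤ (1 - (1 - r) ^ (1 - β)) / (1 - β) := by
  obtain ⟨hr0, hr1⟩ := hr
  have hr : |r| < 1 := abs_lt.2 ⟨by linarith, hr1⟩
  simp only [Gamma_nat_add_div_eq_multichoose
    fun m : ℕ => ((neg_nonpos.2 (Nat.cast_nonneg m)).trans_lt hβ).ne']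
  set c := Ring.multichoose β
  set w : ℕ → ℝ := fun k => r ^ (k + 1) / (k + 1)
  set A := (1 - (1 - r) ^ (1 - β)) / (1 - β)
  set B := ((1 - r) ^ (-β) - 1) / β - A
  have hc (k : ℕ) : 0 ≤ c k := (Ring.multichoose_pos hβ k).le
  have hw (k : ℕ) : 0 ≤ w k := by positivity
  have hA : HasSum (fun k => c k * w k) A := hasSum_multichoose_mul_pow_succ_div hβ1 hr
  have hB : HasSum (fun k => (∑ j ∈ range k, c j) * w k) B :=
    hasSum_sum_range_multichoose_mul_pow_succ_div hβ.ne' hβ1 hr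
  have hB0 : 0 ≤ B := hB.nonneg fun k => mul_nonneg (sum_nonneg fun j _ => hc j) (hw k)
  have h2B : 2 * B ≤ A := by
    rw [mul_div_assoc, mul_div_assoc] at hR
    linarith
  have hsummand (k : ℕ) (s : ℝ) : r ^ (k + 1) * (1 / (k + 1 : ℝ) * s) = w k * s := by
    simp only [w]; ring
  simp only [hsummand]
  exact (tsum_mul_sum_range_sub_mul_succ_le hc ha hak hw hA hB).trans
    (mul_add_one_sub_sq_mul_le ha1 hB0 h2B)
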